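/- arXiv:1903.11528 — 2 statements merged into one kernel-verified Lean document; each statement's English description precedes it below -/
import Mathlib

section
/- Let H ≤ GL(d,ℝ) be integrably admissible with essential frequency support 𝒪, let K ⊆ 𝒪 be compact, V ⊆ H a relatively compact unit neighborhood, and (h_i)_{i ∈ I} a V-separated family in H (i.e., the sets h_i V are pairwise disjoint). Then there exists a constant C = C(K,V) > 0 such that for all h ∈ H, the set I_h := {i ∈ I : h^{-T} K ∩ h_i^{-T} K ≠ ∅} has cardinality at most C. -/
/-!
For `g ∈ H`, every index `i` with `g⁻ᵀ K ∩ h_i⁻ᵀ K ≠ ∅` has `g⁻¹ h_i ∈ ((K,K))`, a compact set by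
properness of the dual action. The family `(g⁻¹ h_i)_i` is still `V`-separated, and a compact set
meets only boundedly many members of a `V`-separated family: cover it by finitely many translates
`s U` with `U⁻¹ U ⊆ V`; two separated elements never lie in the same translate.
-/

open MeasureTheory Matrix Topology
open scoped Pointwise ENNReal

/-- The dual action of `h ∈ GL(d,ℝ)` on `ξ ∈ ℝ^d`, given by `ξ ↦ hᵀ ξ`. -/
noncomputable def dualAct {d : ℕ} (h : GL (Fin d) ℝ) (ξ : Fin d → ℝ) : Fin d → ℝ :=
  ((h : Matrix (Fin d) (Fin d) ℝ)ᵀ).mulVec ξ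

/-- `((Y,Z)) = {h ∈ H : hᵀ Y ∩ Z ≠ ∅}`. -/
def pairSet {d : ℕ} (H : Subgroup (GL (Fin d) ℝ)) (Y Z : Set (Fin d → ℝ)) :
    Set (GL (Fin d) ℝ) :=
  {h | h ∈ H ∧ ∃ ξ ∈ Y, dualAct h ξ ∈ Z}

/-- `H ≤ GL(d,ℝ)` is integrably admissible with essential frequency support `O`:
`H` is closed, `O` is open, co-null and `Hᵀ`-invariant, the dual action of `H` on `O`
is proper, and `O = Hᵀ C` for some compact `C ⊆ O`. -/
def IsIntegrablyAdmissible {d : ℕ} (H : Subgroup (GL (Fin d) ℝ))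
    (O : Set (Fin d → ℝ)) : Prop :=
  IsClosed (H : Set (GL (Fin d) ℝ)) ∧ IsOpen O ∧ MeasureTheory.volume Oᶜ = 0 ∧
  (∀ h ∈ H, ∀ ξ ∈ O, dualAct h ξ ∈ O) ∧
  (∀ K : Set (Fin d → ℝ), K ⊆ O → IsCompact K →
    IsCompact {p : GL (Fin d) ℝ × (Fin d → ℝ) |
      p.1 ∈ H ∧ p.2 ∈ O ∧ p.2 ∈ K ∧ dualAct p.1 p.2 ∈ K}) ∧
  ∃ C : Set (Fin d → ℝ), C ⊆ O ∧ IsCompact C ∧ O = ⋃ h ∈ H, dualAct h '' C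

section TopologicalGroup

variable {G I : Type*} [Group G]

lemma eq_of_inv_mul_mem_of_pairwise_disjoint {V : Set G} {x : I → G} (hV : (1 : G) ∈ V)
    (hsep : Pairwise fun i j => Disjoint ((x i * ·) '' V) ((x j * ·) '' V)) {i j : I}
    (hij : (x i)⁻¹ * x j ∈ V) : i = j := by
  by_contra hne
  have hj_left : x j ∈ (x i * ·) '' V := ⟨(x i)⁻¹ * x j, hij, mul_inv_cancel_left _ _⟩
  have hj_right : x j ∈ (x j * ·) '' V := ⟨1, hV, mul_one _⟩
  exact Set.disjoint_left.mp (hsep hne) hj_left hj_right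

lemma pairwise_disjoint_translates_mul_left {V : Set G} {x : I → G} (g : G)
    (hsep : Pairwise fun i j => Disjoint ((x i * ·) '' V) ((x j * ·) '' V)) :
    Pairwise fun i j => Disjoint ((g * x i * ·) '' V) ((g * x j * ·) '' V) := by
  intro i j hij
  have := (Set.disjoint_image_iff (mul_right_injective g)).mpr (hsep hij)
  simpa only [Set.image_image, mul_assoc] using this

variable [TopologicalSpace G] [IsTopologicalGroup G]

lemma exists_card_le_of_pairwise_disjoint_translates {S V : Set G} (hS : IsCompact S)
    (hV : V ∈ 𝓝 1) :
    ∃ N : ℕ, ∀ x : I → G, (Pairwise fun i j => Disjoint ((x i * ·) '' V) ((x j * ·) '' V)) →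
      {i | x i ∈ S}.Finite ∧ Nat.card {i | x i ∈ S} ≤ N := by
  obtain ⟨W, hW, hWV⟩ := exists_nhds_one_split hV
  set U := W⁻¹ ∩ W
  have hU : U ∈ 𝓝 (1 : G) := Filter.inter_mem (inv_mem_nhds_one G hW) hW
  have hUV : ∀ u ∈ U, ∀ v ∈ U, u⁻¹ * v ∈ V := fun u hu v hv => hWV _ hu.1 _ hv.2
  obtain ⟨t, ht⟩ := compact_covered_by_mul_left_translates hS
    ⟨1, mem_interior_iff_mem_nhds.mpr hU⟩
  refine ⟨t.card, fun x hsep => ?_⟩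
  have hcover : ∀ i : {i | x i ∈ S}, ∃ s ∈ t, s * x i ∈ U := fun i => by
    simpa using ht i.2
  choose s hst hsU using hcover
  let F : {i | x i ∈ S} → t := fun i => ⟨s i, hst i⟩
  have hF : Function.Injective F := fun i j hij => by
    have hs : s i = s j := congrArg Subtype.val hij
    have hV' : (x i)⁻¹ * x j ∈ V := by
      simpa [hs, mul_assoc] using hUV _ (hsU i) _ (hsU j)
    exact Subtype.ext (eq_of_inv_mul_mem_of_pairwise_disjoint (mem_of_mem_nhds hV) hsep hV')
  refine ⟨Set.finite_coe_iff.mp (Finite.of_injective F hF), ?_⟩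
  simpa using Nat.card_le_card_of_injective F hF

end TopologicalGroup

section DualAction

variable {d : ℕ}

lemma dualAct_mul (a b : GL (Fin d) ℝ) (ξ : Fin d → ℝ) :
    dualAct a (dualAct b ξ) = dualAct (b * a) ξ := by
  simp [dualAct, Matrix.transpose_mul, Units.val_mul]

lemma dualAct_inv_self (a : GL (Fin d) ℝ) (ξ : Fin d → ℝ) :
    dualAct a (dualAct a⁻¹ ξ) = ξ := by
  rw [dualAct_mul, inv_mul_cancel]
  simp [dualAct]

lemma inv_mul_mem_pairSet {H : Subgroup (GL (Fin d) ℝ)} {Y Z : Set (Fin d → ℝ)}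
    {g a : GL (Fin d) ℝ} (hg : g ∈ H) (ha : a ∈ H)
    (hne : (dualAct g⁻¹ '' Y ∩ dualAct a⁻¹ '' Z).Nonempty) : g⁻¹ * a ∈ pairSet H Y Z := by
  obtain ⟨_, ⟨ξ, hξ, rfl⟩, η, hη, hξη⟩ := hne
  refine ⟨H.mul_mem (H.inv_mem hg) ha, ξ, hξ, ?_⟩
  rwa [← dualAct_mul, ← hξη, dualAct_inv_self]

lemma IsIntegrablyAdmissible.isCompact_pairSet {H : Subgroup (GL (Fin d) ℝ)}
    {O K : Set (Fin d → ℝ)} (hadm : IsIntegrablyAdmissible H O) (hK : IsCompact K)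
    (hKO : K ⊆ O) : IsCompact (pairSet H K K) := by
  convert (hadm.2.2.2.2.1 K hKO hK).image continuous_fst using 1
  ext a
  constructor
  · rintro ⟨ha, ξ, hξ, haξ⟩
    exact ⟨(a, ξ), ⟨ha, hKO hξ, hξ, haξ⟩, rfl⟩
  · rintro ⟨⟨a, ξ⟩, ⟨ha, -, hξ, haξ⟩, rfl⟩
    exact ⟨ha, ξ, hξ, haξ⟩

end DualAction

theorem stmt3_general {d : ℕ} (H : Subgroup (GL (Fin d) ℝ)) (O : Set (Fin d → ℝ))
    (hadm : IsIntegrablyAdmissible H O)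
    (K : Set (Fin d → ℝ)) (hK : IsCompact K) (hKO : K ⊆ O)
    (V : Set (GL (Fin d) ℝ)) (hV : V ∈ 𝓝 (1 : GL (Fin d) ℝ))
    {I : Type*} (h : I → GL (Fin d) ℝ) (hhH : ∀ i, h i ∈ H)
    (hsep : Pairwise fun i j => Disjoint ((h i * ·) '' V) ((h j * ·) '' V)) :
    ∃ C : ℕ, 0 < C ∧ ∀ g ∈ H,
      {i : I | (dualAct g⁻¹ '' K ∩ dualAct (h i)⁻¹ '' K).Nonempty}.Finite ∧
      Nat.card {i : I | (dualAct g⁻¹ '' K ∩ dualAct (h i)⁻¹ '' K).Nonempty} ≤ C := by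
  obtain ⟨N, hN⟩ := exists_card_le_of_pairwise_disjoint_translates (I := I)
    (hadm.isCompact_pairSet hK hKO) hV
  refine ⟨N + 1, N.succ_pos, fun g hg => ?_⟩
  obtain ⟨hfin, hcard⟩ := hN (fun i => g⁻¹ * h i) (pairwise_disjoint_translates_mul_left g⁻¹ hsep)
  have hsub : {i | (dualAct g⁻¹ '' K ∩ dualAct (h i)⁻¹ '' K).Nonempty} ⊆
      {i | g⁻¹ * h i ∈ pairSet H K K} := fun i hi => inv_mul_mem_pairSet hg (hhH i) hi
  exact ⟨hfin.subset hsub, (Nat.card_mono hfin hsub).trans (hcard.trans N.le_succ)⟩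

theorem stmt3 {d : ℕ} (H : Subgroup (GL (Fin d) ℝ)) (O : Set (Fin d → ℝ))
    (hadm : IsIntegrablyAdmissible H O)
    (K : Set (Fin d → ℝ)) (hK : IsCompact K) (hKO : K ⊆ O)
    (V : Set (GL (Fin d) ℝ)) (hV : V ∈ 𝓝 (1 : GL (Fin d) ℝ))
    (hVc : IsCompact (closure V))
    {I : Type*} (h : I → GL (Fin d) ℝ) (hhH : ∀ i, h i ∈ H)
    (hsep : Pairwise fun i j => Disjoint ((h i * ·) '' V) ((h j * ·) '' V)) :
    ∃ C : ℕ, 0 < C ∧ ∀ g ∈ H,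
      {i : I | (dualAct g⁻¹ '' K ∩ dualAct (h i)⁻¹ '' K).Nonempty}.Finite ∧
      Nat.card {i : I | (dualAct g⁻¹ '' K ∩ dualAct (h i)⁻¹ '' K).Nonempty} ≤ C :=
  stmt3_general H O hadm K hK hKO V hV h hhH hsep
end

section
/- Let G = ℝ^d ⋊ H with Haar measure dμ_G(x,h) = |det h|⁻¹ dx dμ_H(h), and let F: G → [0,∞) be measurable with support in ℝ^d × S for S ⊆ H relatively compact, satisfying F(x,h) ≤ C (1+|x|)^{-N} for all (x,h), where N > d. Then F ∈ L^{p,q}_v(G) for all p,q ∈ [1,∞] and every weight v(x,h) ≤ (1+|x|)^s v₀(h) with v₀ locally bounded, provided N > d/p + s, with ‖F‖_{L^{p,q}_v} ≤ C · sup_{h ∈ S̄}(|det h|^{-1/q} v₀(h)) · ‖(1+|·|)^{s-N}‖_{L^p(ℝ^d)} · μ_H(S)^{1/q} (usual modification for q = ∞). -/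
open MeasureTheory Matrix Topology
open scoped Pointwise ENNReal


/-- The mixed-norm `L^{p,q}_v`-(quasi)norm on `G = ℝ^d ⋊ H` for real-valued `F`:
`‖F‖ = ( ∫_H ( ‖v(·,h) F(·,h)‖_{L^p(ℝ^d)} )^q |det h|⁻¹ dμ_H(h) )^{1/q}`,
with the usual essential supremum modification for `q = ∞`. -/
noncomputable def mixedNormR {d : ℕ} {H : Subgroup (GL (Fin d) ℝ)}
    [MeasurableSpace H] (μH : Measure H)
    (v : (Fin d → ℝ) → H → ℝ) (p q : ℝ≥0∞)
    (F : (Fin d → ℝ) → H → ℝ) : ℝ≥0∞ :=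
  let inn : H → ℝ≥0∞ := fun h => eLpNorm (fun x => v x h * F x h) p volume
  let ν : Measure H := μH.withDensity fun h =>
    ENNReal.ofReal |((h : GL (Fin d) ℝ)).val.det|⁻¹
  if q = ∞ then essSup inn ν
  else (∫⁻ h, inn h ^ q.toReal ∂ν) ^ (1 / q.toReal)

/-- Finiteness of the `L^p`-norm of `(1+|x|)^{s-N}` when `N > d/p + s`. -/
lemma auxA16 {d : ℕ} (p : ℝ≥0∞) (hp : 1 ≤ p) (s : ℝ) (N : ℕ)
    (hN : (d : ℝ) / p.toReal + s < (N : ℝ)) :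
    eLpNorm (fun x : Fin d → ℝ => (1 + ‖x‖) ^ (s - (N : ℝ))) p volume < ⊤ := by
  by_cases hptop : p = ∞
  · subst hptop
    have hsN : s - (N : ℝ) ≤ 0 := by
      simp only [ENNReal.toReal_top, div_zero, zero_add] at hN; linarith
    have hb : ∀ᵐ x : Fin d → ℝ ∂volume, ‖(1 + ‖x‖) ^ (s - (N : ℝ))‖ ≤ 1 := by
      refine Filter.Eventually.of_forall fun x => ?_
      rw [Real.norm_eq_abs, abs_of_nonneg (Real.rpow_nonneg (by positivity) _)]
      exact Real.rpow_le_one_of_one_le_of_nonpos (by simp [norm_nonneg]) hsN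
    calc eLpNorm (fun x : Fin d → ℝ => (1 + ‖x‖) ^ (s - (N : ℝ))) ∞ volume
        ≤ volume (Set.univ : Set (Fin d → ℝ)) ^ (ENNReal.toReal ∞)⁻¹ * ENNReal.ofReal 1 :=
          eLpNorm_le_of_ae_bound hb
      _ < ⊤ := by simp
  · have hp0 : p ≠ 0 := by intro h; rw [h] at hp; exact absurd hp (by simp)
    have hpt : 0 < p.toReal := ENNReal.toReal_pos hp0 hptop
    have hr : (d : ℝ) < p.toReal * ((N : ℝ) - s) := by
      have := (div_lt_iff₀ hpt).mp (by linarith : (d : ℝ) / p.toReal < (N : ℝ) - s)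
      linarith
    have hint : Integrable (fun x : Fin d → ℝ =>
        (1 + ‖x‖) ^ (-(p.toReal * ((N : ℝ) - s)))) volume := by
      apply integrable_one_add_norm (E := Fin d → ℝ)
      simpa using hr
    rw [eLpNorm_eq_lintegral_rpow_enorm_toReal hp0 hptop]
    refine ENNReal.rpow_lt_top_of_nonneg (by positivity) (ne_of_lt ?_)
    have heq : ∀ x : Fin d → ℝ, ‖(1 + ‖x‖) ^ (s - (N : ℝ))‖ₑ ^ p.toReal
        = ‖(1 + ‖x‖) ^ (-(p.toReal * ((N : ℝ) - s)))‖ₑ := by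
      intro x
      have h1 : (0:ℝ) ≤ 1 + ‖x‖ := by positivity
      rw [Real.enorm_eq_ofReal (Real.rpow_nonneg h1 _),
        Real.enorm_eq_ofReal (Real.rpow_nonneg h1 _),
        ENNReal.ofReal_rpow_of_nonneg (Real.rpow_nonneg h1 _) hpt.le,
        ← Real.rpow_mul h1]
      congr 2
      ring
    calc ∫⁻ x, ‖(1 + ‖x‖) ^ (s - (N:ℝ))‖ₑ ^ p.toReal ∂volume
        = ∫⁻ x, ‖(1 + ‖x‖) ^ (-(p.toReal * ((N:ℝ) - s)))‖ₑ ∂volume :=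
          lintegral_congr heq
      _ < ⊤ := hint.2

theorem stmt16 {d : ℕ} (H : Subgroup (GL (Fin d) ℝ))
    [MeasurableSpace H] [BorelSpace H] (μH : Measure H) [μH.IsHaarMeasure]
    -- S ⊆ H relatively compact
    (S : Set H) (hSm : MeasurableSet S) (hSc : IsCompact (closure S))
    -- F measurable, nonnegative, supported in ℝ^d × S, with polynomial decay in x
    (F : (Fin d → ℝ) → H → ℝ)
    (hFm : Measurable (Function.uncurry F)) (hFnn : ∀ x h, 0 ≤ F x h)
    (hFsupp : ∀ (x : Fin d → ℝ) (h : H), h ∉ S → F x h = 0)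
    (C : ℝ) (hC : 0 < C) (N : ℕ)
    (hFb : ∀ (x : Fin d → ℝ) (h : H), F x h ≤ C * (1 + ‖x‖) ^ (-(N : ℝ)))
    -- exponents and weight
    (p q : ℝ≥0∞) (hp : 1 ≤ p) (hq : 1 ≤ q)
    (s : ℝ) (hs : 0 ≤ s)
    (v₀ : H → ℝ) (hv₀nn : ∀ h, 0 ≤ v₀ h)
    (hv₀loc : ∀ Kc : Set H, IsCompact Kc → BddAbove (v₀ '' Kc))
    (v : (Fin d → ℝ) → H → ℝ)
    (hv : ∀ (x : Fin d → ℝ) (h : H), v x h ≤ (1 + ‖x‖) ^ s * v₀ h)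
    (hvnn : ∀ x h, 0 ≤ v x h)
    -- the condition N > d/p + s
    (hN : (d : ℝ) / p.toReal + s < (N : ℝ)) :
    -- F ∈ L^{p,q}_v(G), with the asserted norm bound
    mixedNormR μH v p q F < ⊤ ∧
    mixedNormR μH v p q F ≤
      ENNReal.ofReal C *
      ENNReal.ofReal (⨆ h ∈ closure S,
        |((h : GL (Fin d) ℝ)).val.det| ^ (-(1 / q.toReal)) * v₀ h) *
      eLpNorm (fun x : Fin d → ℝ => (1 + ‖x‖) ^ (s - (N : ℝ))) p volume *
      μH S ^ (1 / q.toReal) := by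
  classical
  set A : ℝ≥0∞ := eLpNorm (fun x : Fin d → ℝ => (1 + ‖x‖) ^ (s - (N : ℝ))) p volume with hAdef
  set dens : H → ℝ≥0∞ := fun h => ENNReal.ofReal |((h : GL (Fin d) ℝ)).val.det|⁻¹ with hdens
  set ν : Measure H := μH.withDensity dens with hν
  set inn : H → ℝ≥0∞ := fun h => eLpNorm (fun x => v x h * F x h) p volume with hinn
  have hmixed : mixedNormR μH v p q F =
      if q = ∞ then essSup inn ν else (∫⁻ h, inn h ^ q.toReal ∂ν) ^ (1 / q.toReal) := rfl
  -- trivial case: S empty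
  rcases S.eq_empty_or_nonempty with rfl | hSne
  · have hzero : ∀ h : H, inn h = 0 := by
      intro h
      have : (fun x => v x h * F x h) = (fun _ => (0:ℝ)) := by
        funext x; rw [hFsupp x h (Set.notMem_empty h), mul_zero]
      simp [hinn, this, eLpNorm_zero']
    have hL : mixedNormR μH v p q (F) = 0 := by
      rw [hmixed]
      by_cases hqt : q = ∞
      · rw [if_pos hqt]
        exact le_antisymm (essSup_le_of_ae_le 0 (Filter.Eventually.of_forall
          fun h => (hzero h).le)) (zero_le)
      · rw [if_neg hqt]
        have hqr : 0 < q.toReal := ENNReal.toReal_pos (by intro h; rw [h] at hq; simp at hq) hqt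
        rw [lintegral_congr fun h => by rw [hzero h, ENNReal.zero_rpow_of_pos hqr],
          lintegral_zero, ENNReal.zero_rpow_of_pos (by positivity)]
    rw [hL]
    exact ⟨by simp, zero_le⟩
  -- main case
  obtain ⟨h₀, hh₀⟩ := hSne
  have hA : A < ⊤ := auxA16 p hp s N hN
  -- determinant positivity and continuity
  have hdet_pos : ∀ h : H, 0 < |((h : GL (Fin d) ℝ)).val.det| := by
    intro h
    exact abs_pos.mpr
      (((Matrix.isUnit_iff_isUnit_det _).mp ((h : GL (Fin d) ℝ)).isUnit).ne_zero)
  have hdet_cont : Continuous fun h : H => ((h : GL (Fin d) ℝ)).val.det :=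
    (Units.continuous_val.comp continuous_subtype_val).matrix_det
  have hdens_meas : Measurable dens :=
    ENNReal.measurable_ofReal.comp (hdet_cont.abs.measurable.inv)
  -- the sup M
  set f : H → ℝ := fun h => |((h : GL (Fin d) ℝ)).val.det| ^ (-(1 / q.toReal)) * v₀ h with hf
  set M : ℝ := ⨆ h ∈ closure S, f h with hM
  have hfnn : ∀ h, 0 ≤ f h := fun h =>
    mul_nonneg (Real.rpow_nonneg (abs_nonneg _) _) (hv₀nn h)
  obtain ⟨a, ha⟩ := hSc.bddAbove_image
    ((hdet_cont.abs.continuousOn).rpow_const fun h _ => Or.inl (hdet_pos h).ne')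
  obtain ⟨b, hb⟩ := hv₀loc (closure S) hSc
  have hBdd : BddAbove (f '' closure S) := by
    refine ⟨a * b, ?_⟩
    rintro _ ⟨h, hh, rfl⟩
    have h1 : |((h : GL (Fin d) ℝ)).val.det| ^ (-(1 / q.toReal)) ≤ a :=
      ha (Set.mem_image_of_mem _ hh)
    have h2 : v₀ h ≤ b := hb (Set.mem_image_of_mem _ hh)
    exact mul_le_mul h1 h2 (hv₀nn h)
      (le_trans (Real.rpow_nonneg (abs_nonneg _) _) h1)
  haveI : Nonempty H := ⟨h₀⟩
  have hrange : BddAbove (Set.range fun i : (closure S : Set H) => f i) := by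
    rwa [← Set.image_eq_range]
  have hsub : (⨆ i : (closure S : Set H), f i) = ⨆ h ∈ closure S, f h :=
    ciSup_subtype_fun hrange
      (by
        rw [Real.sSup_empty]
        exact le_trans (hfnn h₀) (le_ciSup_set hBdd (subset_closure hh₀)))
  have hMb : ∀ h ∈ S, f h ≤ M := fun h hh => by
    rw [hM, ← hsub]; exact le_ciSup_set hBdd (subset_closure hh)
  have hM0 : 0 ≤ M := le_trans (hfnn h₀) (hMb h₀ hh₀)
  -- bounds on inn
  have hinn0 : ∀ h ∉ S, inn h = 0 := by
    intro h hh
    have : (fun x => v x h * F x h) = (fun _ => (0:ℝ)) := by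
      funext x; rw [hFsupp x h hh, mul_zero]
    simp [hinn, this, eLpNorm_zero']
  have hinnS : ∀ h, inn h ≤ ENNReal.ofReal C * ENNReal.ofReal (v₀ h) * A := by
    intro h
    have hbd : ∀ x : Fin d → ℝ,
        ‖v x h * F x h‖ ≤ ‖(C * v₀ h) * (1 + ‖x‖) ^ (s - (N : ℝ))‖ := by
      intro x
      have h1 : (0:ℝ) < 1 + ‖x‖ := by positivity
      have hrn : (0:ℝ) ≤ (1 + ‖x‖) ^ (s - (N : ℝ)) := Real.rpow_nonneg h1.le _
      rw [Real.norm_eq_abs, Real.norm_eq_abs,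
        abs_of_nonneg (mul_nonneg (hvnn x h) (hFnn x h)),
        abs_of_nonneg (mul_nonneg (mul_nonneg hC.le (hv₀nn h)) hrn)]
      calc v x h * F x h
          ≤ ((1 + ‖x‖) ^ s * v₀ h) * (C * (1 + ‖x‖) ^ (-(N : ℝ))) :=
            mul_le_mul (hv x h) (hFb x h) (hFnn x h)
              (mul_nonneg (Real.rpow_nonneg h1.le _) (hv₀nn h))
        _ = C * v₀ h * (1 + ‖x‖) ^ (s - (N : ℝ)) := by
            rw [show s - (N:ℝ) = s + (-(N:ℝ)) by ring, Real.rpow_add h1]; ring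
    calc inn h ≤ eLpNorm (fun x : Fin d → ℝ =>
            (C * v₀ h) * (1 + ‖x‖) ^ (s - (N : ℝ))) p volume := eLpNorm_mono hbd
      _ = ‖C * v₀ h‖ₑ * A := by
          exact eLpNorm_const_smul (𝕜 := ℝ) (C * v₀ h)
            (fun x : Fin d → ℝ => (1 + ‖x‖) ^ (s - (N : ℝ))) p volume
      _ = ENNReal.ofReal C * ENNReal.ofReal (v₀ h) * A := by
          rw [Real.enorm_eq_ofReal (mul_nonneg hC.le (hv₀nn h)),
            ENNReal.ofReal_mul hC.le]
  have hμS : μH S ≠ ⊤ :=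
    (lt_of_le_of_lt (measure_mono subset_closure) hSc.measure_lt_top).ne
  -- the main bound
  have key : mixedNormR μH v p q F ≤
      ENNReal.ofReal C * ENNReal.ofReal M * A * μH S ^ (1 / q.toReal) := by
    rw [hmixed]
    by_cases hqt : q = ∞
    · rw [if_pos hqt]
      have hq0 : q.toReal = 0 := by rw [hqt]; simp
      have hbound : ∀ h, inn h ≤ ENNReal.ofReal C * ENNReal.ofReal M * A := by
        intro h
        by_cases hh : h ∈ S
        · refine le_trans (hinnS h) ?_
          have : v₀ h ≤ M := by
            have h2 := hMb h hh
            simp only [hf, hq0, div_zero, neg_zero, Real.rpow_zero, one_mul] at h2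
            exact h2
          exact mul_le_mul_left (mul_le_mul_right (ENNReal.ofReal_le_ofReal this) _) _
        · rw [hinn0 h hh]; exact zero_le
      calc essSup inn ν ≤ ENNReal.ofReal C * ENNReal.ofReal M * A :=
            essSup_le_of_ae_le _ (Filter.Eventually.of_forall hbound)
        _ = ENNReal.ofReal C * ENNReal.ofReal M * A * μH S ^ (1 / q.toReal) := by
            rw [hq0]; simp
    · rw [if_neg hqt]
      have hqr : 1 ≤ q.toReal := by
        rw [← ENNReal.toReal_one]
        exact ENNReal.toReal_mono hqt hq
      have hqr0 : 0 < q.toReal := lt_of_lt_of_le one_pos hqr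
      set qr := q.toReal
      set G1 : H → ℝ≥0∞ := S.indicator
        (fun h => (ENNReal.ofReal C * ENNReal.ofReal (v₀ h) * A) ^ qr) with hG1
      have step1 : ∫⁻ h, inn h ^ qr ∂ν ≤ ∫⁻ h, G1 h ∂ν := by
        refine lintegral_mono fun h => ?_
        by_cases hh : h ∈ S
        · rw [hG1, Set.indicator_of_mem hh]
          exact ENNReal.rpow_le_rpow (hinnS h) hqr0.le
        · rw [hinn0 h hh, ENNReal.zero_rpow_of_pos hqr0]
          exact zero_le
      have step2 : ∫⁻ h, G1 h ∂ν = ∫⁻ h, dens h * G1 h ∂μH := by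
        rw [hν, lintegral_withDensity_eq_lintegral_mul_non_measurable μH hdens_meas
          (Filter.Eventually.of_forall fun h => ENNReal.ofReal_lt_top) G1]
        rfl
      have step3 : ∫⁻ h, dens h * G1 h ∂μH ≤
          ∫⁻ h, S.indicator (fun _ => (ENNReal.ofReal C * ENNReal.ofReal M * A) ^ qr) h ∂μH := by
        refine lintegral_mono fun h => ?_
        by_cases hh : h ∈ S
        · rw [hG1, Set.indicator_of_mem hh, Set.indicator_of_mem hh]
          have key1 : dens h * ENNReal.ofReal (v₀ h) ^ qr ≤ ENNReal.ofReal M ^ qr := by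
            rw [ENNReal.ofReal_rpow_of_nonneg (hv₀nn h) hqr0.le, hdens,
              ← ENNReal.ofReal_mul (inv_nonneg.mpr (abs_nonneg _)),
              ENNReal.ofReal_rpow_of_nonneg hM0 hqr0.le]
            refine ENNReal.ofReal_le_ofReal ?_
            have hrw : (f h) ^ qr = |((h : GL (Fin d) ℝ)).val.det|⁻¹ * v₀ h ^ qr := by
              simp only [hf]
              rw [Real.mul_rpow (Real.rpow_nonneg (abs_nonneg _) _) (hv₀nn h),
                ← Real.rpow_mul (abs_nonneg _),
                show (-(1 / qr)) * qr = (-1 : ℝ) by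
                  rw [neg_mul, one_div_mul_cancel hqr0.ne'],
                Real.rpow_neg_one]
            rw [← hrw]
            exact Real.rpow_le_rpow (hfnn h) (hMb h hh) hqr0.le
          calc dens h * (ENNReal.ofReal C * ENNReal.ofReal (v₀ h) * A) ^ qr
              = ENNReal.ofReal C ^ qr * (dens h * ENNReal.ofReal (v₀ h) ^ qr) * A ^ qr := by
                rw [ENNReal.mul_rpow_of_nonneg _ _ hqr0.le,
                  ENNReal.mul_rpow_of_nonneg _ _ hqr0.le]
                ring
            _ ≤ ENNReal.ofReal C ^ qr * ENNReal.ofReal M ^ qr * A ^ qr := by gcongr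
            _ = (ENNReal.ofReal C * ENNReal.ofReal M * A) ^ qr := by
                rw [ENNReal.mul_rpow_of_nonneg _ _ hqr0.le,
                  ENNReal.mul_rpow_of_nonneg _ _ hqr0.le]
        · rw [hG1, Set.indicator_of_notMem hh, Set.indicator_of_notMem hh, mul_zero]
      have step4 : ∫⁻ h, S.indicator
          (fun _ => (ENNReal.ofReal C * ENNReal.ofReal M * A) ^ qr) h ∂μH
          = (ENNReal.ofReal C * ENNReal.ofReal M * A) ^ qr * μH S := by
        rw [lintegral_indicator hSm, setLIntegral_const]
      calc (∫⁻ h, inn h ^ qr ∂ν) ^ (1 / qr)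
          ≤ ((ENNReal.ofReal C * ENNReal.ofReal M * A) ^ qr * μH S) ^ (1 / qr) := by
            refine ENNReal.rpow_le_rpow ?_ (by positivity)
            rw [← step4]
            exact le_trans step1 (le_trans (le_of_eq step2) step3)
        _ = ENNReal.ofReal C * ENNReal.ofReal M * A * μH S ^ (1 / qr) := by
            rw [ENNReal.mul_rpow_of_nonneg _ _ (by positivity : (0:ℝ) ≤ 1 / qr),
              ← ENNReal.rpow_mul,
              show qr * (1 / qr) = 1 by field_simp, ENNReal.rpow_one]
  refine ⟨lt_of_le_of_lt key ?_, key⟩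
  refine ENNReal.mul_lt_top (ENNReal.mul_lt_top (ENNReal.mul_lt_top
    ENNReal.ofReal_lt_top ENNReal.ofReal_lt_top) hA) ?_
  exact ENNReal.rpow_lt_top_of_nonneg (by positivity) hμS
end
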